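/- Let A be a filter in a distributive inverse semigroup S. Then A is an ultrafilter if and only if d(A) = (A⁻¹A)↑ is an ultrafilter; similarly A is a prime filter if and only if d(A) is a prime filter. -/
import Mathlib


/-- An inverse semigroup. -/
class InverseSemigroup (S : Type*) extends Semigroup S where
  sinv : S → S
  mul_sinv_mul : ∀ a : S, a * sinv a * a = a
  sinv_mul_sinv : ∀ a : S, sinv a * a * sinv a = sinv a
  idem_comm : ∀ e f : S, e * e = e → f * f = f → e * f = f * e

namespace InverseSemigroup

variable {S : Type*} [InverseSemigroup S]

/-- The natural partial order: `a ≤ b` iff `a = e * b` for some idempotent `e`. -/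
def nle (a b : S) : Prop := ∃ e : S, e * e = e ∧ a = e * b

/-- Two elements are compatible if `a⁻¹b` and `ab⁻¹` are idempotents. -/
def compat (a b : S) : Prop :=
  (sinv a * b) * (sinv a * b) = sinv a * b ∧ (a * sinv b) * (a * sinv b) = a * sinv b

end InverseSemigroup

open InverseSemigroup

/-- A distributive inverse semigroup: an inverse semigroup with zero having joins of
compatible pairs, over which multiplication distributes. -/
class DistributiveInverseSemigroup (S : Type*) extends InverseSemigroup S where
  zero : S
  zero_mul : ∀ a : S, zero * a = zero
  mul_zero : ∀ a : S, a * zero = zero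
  join : S → S → S
  le_join_left : ∀ a b : S, compat a b → nle a (join a b)
  le_join_right : ∀ a b : S, compat a b → nle b (join a b)
  join_le : ∀ a b c : S, compat a b → nle a c → nle b c → nle (join a b) c
  mul_join : ∀ a b c : S, compat a b → c * join a b = join (c * a) (c * b)
  join_mul : ∀ a b c : S, compat a b → join a b * c = join (a * c) (b * c)

namespace DistributiveInverseSemigroup

variable {S : Type*} [DistributiveInverseSemigroup S]

/-- A filter: nonempty, downward directed and upward closed. -/
def IsFilter (A : Set S) : Prop :=
  A.Nonempty ∧ (∀ x ∈ A, ∀ y ∈ A, ∃ z ∈ A, nle z x ∧ nle z y) ∧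
    (∀ x ∈ A, ∀ y : S, nle x y → y ∈ A)

/-- Proper filter: does not contain the zero. -/
def IsProperFilter (A : Set S) : Prop := IsFilter A ∧ zero ∉ A

/-- Prime filter: proper, and a compatible join lies in it only if one of the
joinands does. -/
def IsPrimeFilter (A : Set S) : Prop :=
  IsProperFilter A ∧ ∀ a b : S, compat a b → join a b ∈ A → a ∈ A ∨ b ∈ A

/-- Ultrafilter: maximal proper filter. -/
def IsUltraFilter (A : Set S) : Prop :=
  IsProperFilter A ∧ ∀ B : Set S, IsProperFilter B → A ⊆ B → A = B

/-- `d(A) = (A⁻¹A)↑`. -/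
def dOf (A : Set S) : Set S := {t | ∃ x ∈ A, ∃ u ∈ A, nle (sinv x * u) t}

end DistributiveInverseSemigroup
section Helpers

namespace InverseSemigroup

variable {S : Type*} [InverseSemigroup S]

local postfix:max "ⁱ" => sinv

lemma idem_mul_idem {e f : S} (he : e * e = e) (hf : f * f = f) :
    (e * f) * (e * f) = e * f := by
  have h := idem_comm e f he hf
  calc e * f * (e * f) = e * ((f * e) * f) := by simp only [mul_assoc]
    _ = e * ((e * f) * f) := by rw [← h]
    _ = (e * e) * (f * f) := by simp only [mul_assoc]
    _ = e * f := by rw [he, hf]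

lemma mul_sinv_idem (a : S) : (a * aⁱ) * (a * aⁱ) = a * aⁱ := by
  calc a * aⁱ * (a * aⁱ) = (a * aⁱ * a) * aⁱ := by simp only [mul_assoc]
    _ = a * aⁱ := by rw [mul_sinv_mul]

lemma sinv_mul_idem (a : S) : (aⁱ * a) * (aⁱ * a) = aⁱ * a := by
  calc aⁱ * a * (aⁱ * a) = (aⁱ * a * aⁱ) * a := by simp only [mul_assoc]
    _ = aⁱ * a := by rw [sinv_mul_sinv]

lemma mul_sinv_mul' (a : S) : a * (aⁱ * a) = a := by
  rw [← mul_assoc, mul_sinv_mul]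

lemma sinv_mul_sinv' (a : S) : aⁱ * (a * aⁱ) = aⁱ := by
  rw [← mul_assoc, sinv_mul_sinv]

lemma sinv_unique {a x : S} (h1 : a * x * a = a) (h2 : x * a * x = x) : x = aⁱ := by
  set y := aⁱ with hy
  have hya : a * y * a = a := mul_sinv_mul a
  have hyy : y * a * y = y := sinv_mul_sinv a
  have hia : (x * a) * (x * a) = x * a := by
    calc x * a * (x * a) = x * (a * x * a) := by simp only [mul_assoc]
      _ = x * a := by rw [h1]
  have hja : (y * a) * (y * a) = y * a := sinv_mul_idem a
  have hax : (a * x) * (a * x) = a * x := by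
    calc a * x * (a * x) = (a * x * a) * x := by simp only [mul_assoc]
      _ = a * x := by rw [h1]
  have hay : (a * y) * (a * y) = a * y := mul_sinv_idem a
  -- x = y * a * x
  have e1 : x = y * a * x := by
    calc x = x * a * x := h2.symm
      _ = x * (a * y * a) * x := by rw [hya]
      _ = ((x * a) * (y * a)) * x := by simp only [mul_assoc]
      _ = ((y * a) * (x * a)) * x := by rw [idem_comm _ _ hia hja]
      _ = y * (a * x * a) * x := by simp only [mul_assoc]
      _ = y * a * x := by rw [h1]
  -- y = x * a * y
  have e2 : y = x * a * y := by
    calc y = y * a * y := hyy.symm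
      _ = y * (a * x * a) * y := by rw [h1]
      _ = ((y * a) * (x * a)) * y := by simp only [mul_assoc]
      _ = ((x * a) * (y * a)) * y := by rw [idem_comm _ _ hja hia]
      _ = x * (a * y * a) * y := by simp only [mul_assoc]
      _ = x * a * y := by rw [hya]
  calc x = y * a * x := e1
    _ = (x * a * y) * a * x := by rw [← e2]
    _ = x * ((a * y) * (a * x)) := by simp only [mul_assoc]
    _ = x * ((a * x) * (a * y)) := by rw [idem_comm _ _ hay hax]
    _ = (x * a * x) * (a * y) := by simp only [mul_assoc]
    _ = x * (a * y) := by rw [h2]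
    _ = x * a * y := by rw [mul_assoc]
    _ = y := e2.symm

lemma sinv_sinv (a : S) : aⁱⁱ = a :=
  (sinv_unique (sinv_mul_sinv a) (mul_sinv_mul a)).symm

lemma sinv_idem {e : S} (he : e * e = e) : eⁱ = e := by
  have : e * e * e = e := by rw [he, he]
  exact (sinv_unique this this).symm

lemma sinv_mul (a b : S) : (a * b)ⁱ = bⁱ * aⁱ := by
  have hc : (b * bⁱ) * (aⁱ * a) = (aⁱ * a) * (b * bⁱ) :=
    idem_comm _ _ (mul_sinv_idem b) (sinv_mul_idem a)
  have h1 : (a * b) * (bⁱ * aⁱ) * (a * b) = a * b := by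
    calc (a * b) * (bⁱ * aⁱ) * (a * b) = a * ((b * bⁱ) * (aⁱ * a)) * b := by
          simp only [mul_assoc]
      _ = a * ((aⁱ * a) * (b * bⁱ)) * b := by rw [hc]
      _ = (a * aⁱ * a) * (b * bⁱ * b) := by simp only [mul_assoc]
      _ = a * b := by rw [mul_sinv_mul, mul_sinv_mul]
  have h2 : (bⁱ * aⁱ) * (a * b) * (bⁱ * aⁱ) = bⁱ * aⁱ := by
    calc (bⁱ * aⁱ) * (a * b) * (bⁱ * aⁱ) = bⁱ * ((aⁱ * a) * (b * bⁱ)) * aⁱ := by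
          simp only [mul_assoc]
      _ = bⁱ * ((b * bⁱ) * (aⁱ * a)) * aⁱ := by rw [← hc]
      _ = (bⁱ * b * bⁱ) * (aⁱ * a * aⁱ) := by simp only [mul_assoc]
      _ = bⁱ * aⁱ := by rw [sinv_mul_sinv, sinv_mul_sinv]
  exact (sinv_unique h1 h2).symm

lemma conj_idem {e : S} (he : e * e = e) (c : S) :
    (c * e * cⁱ) * (c * e * cⁱ) = c * e * cⁱ := by
  have hc : e * (cⁱ * c) = (cⁱ * c) * e := idem_comm _ _ he (sinv_mul_idem c)
  calc (c * e * cⁱ) * (c * e * cⁱ) = c * (e * (cⁱ * c)) * (e * cⁱ) := by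
        simp only [mul_assoc]
    _ = c * ((cⁱ * c) * e) * (e * cⁱ) := by rw [hc]
    _ = (c * cⁱ * c) * (e * e) * cⁱ := by simp only [mul_assoc]
    _ = c * e * cⁱ := by rw [mul_sinv_mul, he]

lemma compat_mul_left {a b : S} (h : compat a b) (c : S) : compat (c * a) (c * b) := by
  obtain ⟨h1, h2⟩ := h
  constructor
  · -- (c*a)ⁱ * (c*b) = aⁱ * (cⁱ*c) * b  idempotent
    have key : (c * a)ⁱ * (c * b) = (aⁱ * (cⁱ * c) * a) * (aⁱ * b) := by
      have hc : (a * aⁱ) * (cⁱ * c) = (cⁱ * c) * (a * aⁱ) :=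
        idem_comm _ _ (mul_sinv_idem a) (sinv_mul_idem c)
      calc (c * a)ⁱ * (c * b) = (aⁱ * cⁱ) * (c * b) := by rw [sinv_mul]
        _ = (aⁱ * a * aⁱ) * (cⁱ * c) * b := by rw [sinv_mul_sinv]; simp only [mul_assoc]
        _ = aⁱ * ((a * aⁱ) * (cⁱ * c)) * b := by simp only [mul_assoc]
        _ = aⁱ * ((cⁱ * c) * (a * aⁱ)) * b := by rw [hc]
        _ = (aⁱ * (cⁱ * c) * a) * (aⁱ * b) := by simp only [mul_assoc]
    rw [key]
    have i1 : (aⁱ * (cⁱ * c) * a) * (aⁱ * (cⁱ * c) * a) = aⁱ * (cⁱ * c) * a := by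
      have := conj_idem (e := cⁱ * c) (sinv_mul_idem c) aⁱ
      rwa [sinv_sinv] at this
    exact idem_mul_idem i1 h1
  · -- (c*a) * (c*b)ⁱ = c * (a*bⁱ) * cⁱ
    have key : (c * a) * (c * b)ⁱ = c * (a * bⁱ) * cⁱ := by
      rw [sinv_mul]; simp only [mul_assoc]
    rw [key]
    exact conj_idem h2 c

/-! ### order lemmas -/

lemma nle_refl (a : S) : nle a a :=
  ⟨a * aⁱ, mul_sinv_idem a, (mul_sinv_mul a).symm⟩

lemma nle_trans {a b c : S} (h1 : nle a b) (h2 : nle b c) : nle a c := by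
  obtain ⟨e, he, rfl⟩ := h1
  obtain ⟨f, hf, rfl⟩ := h2
  exact ⟨e * f, idem_mul_idem he hf, by rw [mul_assoc]⟩

lemma nle_iff_right {a b : S} : nle a b ↔ ∃ f : S, f * f = f ∧ a = b * f := by
  constructor
  · rintro ⟨e, he, rfl⟩
    refine ⟨bⁱ * e * b, ?_, ?_⟩
    · have := conj_idem he bⁱ
      rwa [sinv_sinv] at this
    · have hc : (b * bⁱ) * e = e * (b * bⁱ) := idem_comm _ _ (mul_sinv_idem b) he
      symm
      calc b * (bⁱ * e * b) = ((b * bⁱ) * e) * b := by simp only [mul_assoc]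
        _ = (e * (b * bⁱ)) * b := by rw [hc]
        _ = e * (b * bⁱ * b) := by simp only [mul_assoc]
        _ = e * b := by rw [mul_sinv_mul]
  · rintro ⟨f, hf, rfl⟩
    refine ⟨b * f * bⁱ, conj_idem hf b, ?_⟩
    have hc : f * (bⁱ * b) = (bⁱ * b) * f := idem_comm _ _ hf (sinv_mul_idem b)
    symm
    calc b * f * bⁱ * b = b * (f * (bⁱ * b)) := by simp only [mul_assoc]
      _ = b * ((bⁱ * b) * f) := by rw [hc]
      _ = (b * (bⁱ * b)) * f := by simp only [mul_assoc]
      _ = b * f := by rw [mul_sinv_mul']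

lemma nle_mul {a b c d : S} (h1 : nle a b) (h2 : nle c d) : nle (a * c) (b * d) := by
  obtain ⟨f, hf, rfl⟩ := nle_iff_right.mp h1
  obtain ⟨e, he, rfl⟩ := h2
  set g := f * e with hg
  have hgg : g * g = g := idem_mul_idem hf he
  have hc : g * (bⁱ * b) = (bⁱ * b) * g := idem_comm _ _ hgg (sinv_mul_idem b)
  refine ⟨b * g * bⁱ, conj_idem hgg b, ?_⟩
  symm
  calc (b * g * bⁱ) * (b * d) = b * (g * (bⁱ * b)) * d := by simp only [mul_assoc]
    _ = b * ((bⁱ * b) * g) * d := by rw [hc]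
    _ = (b * (bⁱ * b)) * (g * d) := by simp only [mul_assoc]
    _ = b * (g * d) := by rw [mul_sinv_mul']
    _ = b * f * (e * d) := by rw [hg]; simp only [mul_assoc]

lemma sinv_nle {a b : S} (h : nle a b) : nle aⁱ bⁱ := by
  obtain ⟨e, he, rfl⟩ := h
  exact nle_iff_right.mpr ⟨e, he, by rw [sinv_mul, sinv_idem he]⟩

lemma nle_of_idem_left {e : S} (he : e * e = e) (b : S) : nle (e * b) b := ⟨e, he, rfl⟩

lemma nle_of_idem_right {f : S} (hf : f * f = f) (b : S) : nle (b * f) b :=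
  nle_iff_right.mpr ⟨f, hf, rfl⟩

end InverseSemigroup

end Helpers
namespace DistributiveInverseSemigroup

open InverseSemigroup

variable {S : Type*} [DistributiveInverseSemigroup S]

local postfix:max "ⁱ" => sinv

lemma nle_zero_eq {a : S} (h : nle a (zero : S)) : a = zero := by
  obtain ⟨e, _, rfl⟩ := h
  exact mul_zero e

lemma sinv_zero : (zero : S)ⁱ = zero := sinv_idem (zero_mul zero)

lemma mem_of_nle {A : Set S} (hA : IsFilter A) {z t : S} (hz : z ∈ A) (h : nle z t) :
    t ∈ A := hA.2.2 z hz t h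

lemma directed3 {A : Set S} (hA : IsFilter A) {x y w : S}
    (hx : x ∈ A) (hy : y ∈ A) (hw : w ∈ A) :
    ∃ z ∈ A, nle z x ∧ nle z y ∧ nle z w := by
  obtain ⟨z1, hz1, h1x, h1y⟩ := hA.2.1 x hx y hy
  obtain ⟨z, hz, hzz1, hzw⟩ := hA.2.1 z1 hz1 w hw
  exact ⟨z, hz, nle_trans hzz1 h1x, nle_trans hzz1 h1y, hzw⟩

lemma sinv_mul_mem_dOf {A : Set S} {x u : S} (hx : x ∈ A) (hu : u ∈ A) :
    xⁱ * u ∈ dOf A := ⟨x, hx, u, hu, nle_refl _⟩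

lemma dOf_isFilter {A : Set S} (hA : IsFilter A) : IsFilter (dOf A) := by
  obtain ⟨⟨a, ha⟩, hdir, hup⟩ := hA
  refine ⟨⟨aⁱ * a, sinv_mul_mem_dOf ha ha⟩, ?_, ?_⟩
  · rintro t ⟨x, hx, u, hu, ht⟩ s ⟨y, hy, v, hv, hs⟩
    obtain ⟨z1, hz1, h1x, h1u⟩ := hdir x hx u hu
    obtain ⟨z2, hz2, h2y, h2v⟩ := hdir y hy v hv
    obtain ⟨z, hz, hz1', hz2'⟩ := hdir z1 hz1 z2 hz2
    have hzx := nle_trans hz1' h1x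
    have hzu := nle_trans hz1' h1u
    have hzy := nle_trans hz2' h2y
    have hzv := nle_trans hz2' h2v
    refine ⟨zⁱ * z, sinv_mul_mem_dOf hz hz, ?_, ?_⟩
    · exact nle_trans (nle_mul (sinv_nle hzx) hzu) ht
    · exact nle_trans (nle_mul (sinv_nle hzy) hzv) hs
  · rintro t ⟨x, hx, u, hu, ht⟩ s hts
    exact ⟨x, hx, u, hu, nle_trans ht hts⟩

lemma zero_mem_dOf_iff {A : Set S} (hA : IsFilter A) :
    (zero : S) ∈ dOf A ↔ (zero : S) ∈ A := by
  constructor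
  · rintro ⟨x, hx, u, hu, h0⟩
    have hxu : xⁱ * u = zero := nle_zero_eq h0
    obtain ⟨z, hz, hzx, hzu⟩ := hA.2.1 x hx u hu
    have h1 : nle (zⁱ * z) (zero : S) := by
      rw [← hxu]; exact nle_mul (sinv_nle hzx) hzu
    have h2 : zⁱ * z = zero := nle_zero_eq h1
    have h3 : z = zero := by
      have := mul_sinv_mul' z
      rw [h2, mul_zero] at this
      exact this.symm
    rwa [h3] at hz
  · intro h0
    refine ⟨zero, h0, zero, h0, ?_⟩
    rw [sinv_zero, zero_mul]
    exact nle_refl _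

lemma dOf_mono {A B : Set S} (h : A ⊆ B) : dOf A ⊆ dOf B := by
  rintro t ⟨x, hx, u, hu, ht⟩
  exact ⟨x, h hx, u, h hu, ht⟩

/-- Lemma L: `A = (a · d(A))↑` for any `a ∈ A`. -/
lemma mem_iff_mul_dOf {A : Set S} (hA : IsFilter A) {a : S} (ha : a ∈ A) (t : S) :
    t ∈ A ↔ ∃ e ∈ dOf A, nle (a * e) t := by
  constructor
  · intro ht
    refine ⟨aⁱ * t, sinv_mul_mem_dOf ha ht, ?_⟩
    rw [← mul_assoc]
    exact nle_of_idem_left (mul_sinv_idem a) t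
  · rintro ⟨e, ⟨x, hx, u, hu, he⟩, hat⟩
    obtain ⟨z, hz, hza, hzx, hzu⟩ := directed3 hA ha hx hu
    have h1 : nle z (a * (xⁱ * u)) := by
      have := nle_mul hza (nle_mul (sinv_nle hzx) hzu)
      rwa [mul_sinv_mul'] at this
    have h2 : nle (a * (xⁱ * u)) (a * e) := nle_mul (nle_refl a) he
    exact mem_of_nle hA hz (nle_trans (nle_trans h1 h2) hat)

lemma isProperFilter_dOf_iff {A : Set S} (hA : IsFilter A) :
    IsProperFilter (dOf A) ↔ IsProperFilter A := by
  constructor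
  · rintro ⟨_, h0⟩
    exact ⟨hA, fun h => h0 ((zero_mem_dOf_iff hA).mpr h)⟩
  · rintro ⟨_, h0⟩
    exact ⟨dOf_isFilter hA, fun h => h0 ((zero_mem_dOf_iff hA).mp h)⟩

end DistributiveInverseSemigroup
open InverseSemigroup DistributiveInverseSemigroup

local postfix:max "ⁱ" => InverseSemigroup.sinv

/-- In a distributive inverse semigroup, a filter `A` is an ultrafilter iff `d(A)` is,
and a prime filter iff `d(A)` is. -/
theorem stmt15 {S : Type*} [DistributiveInverseSemigroup S] (A : Set S)
    (hA : IsFilter A) :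
    (IsUltraFilter A ↔ IsUltraFilter (dOf A)) ∧
    (IsPrimeFilter A ↔ IsPrimeFilter (dOf A)) := by
  constructor
  · -- ultrafilter part
    constructor
    · rintro ⟨hAp, hAmax⟩
      obtain ⟨a, ha⟩ := hA.1
      refine ⟨(isProperFilter_dOf_iff hA).mpr hAp, ?_⟩
      intro B hB hdB
      set A' : Set S := {t | ∃ b ∈ B, nle (a * b) t} with hA'def
      have hA'filter : IsFilter A' := by
        obtain ⟨⟨b0, hb0⟩, hBdir, hBup⟩ := hB.1
        refine ⟨⟨a * b0, b0, hb0, nle_refl _⟩, ?_, ?_⟩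
        · rintro t ⟨b1, hb1, ht⟩ s ⟨b2, hb2, hs⟩
          exact let ⟨b, hb, hbb1, hbb2⟩ := hBdir b1 hb1 b2 hb2
            ⟨a * b, ⟨b, hb, nle_refl _⟩,
              nle_trans (nle_mul (nle_refl a) hbb1) ht,
              nle_trans (nle_mul (nle_refl a) hbb2) hs⟩
        · rintro t ⟨b, hb, ht⟩ s hts
          exact ⟨b, hb, nle_trans ht hts⟩
      have hAA' : A ⊆ A' := by
        intro t ht
        refine ⟨aⁱ * t, hdB (sinv_mul_mem_dOf ha ht), ?_⟩
        rw [← mul_assoc]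
        exact nle_of_idem_left (mul_sinv_idem a) t
      have hA'proper : IsProperFilter A' := by
        refine ⟨hA'filter, ?_⟩
        rintro ⟨b, hb, h0⟩
        have hab : a * b = DistributiveInverseSemigroup.zero := nle_zero_eq h0
        have haa : aⁱ * a ∈ B := hdB (sinv_mul_mem_dOf ha ha)
        obtain ⟨c, hc, hc1, hc2⟩ := hB.1.2.1 _ haa _ hb
        have hci : nle cⁱ (aⁱ * a) := by
          have := sinv_nle hc1
          rwa [sinv_idem (sinv_mul_idem a)] at this
        have hcc : nle (c * cⁱ) (aⁱ * a) := by
          have := nle_mul hc1 hci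
          rwa [sinv_mul_idem a] at this
        have hc0 : nle c (DistributiveInverseSemigroup.zero : S) := by
          have h1 := nle_mul hcc hc2
          rw [mul_sinv_mul, mul_assoc, hab, DistributiveInverseSemigroup.mul_zero] at h1
          exact h1
        have : c = DistributiveInverseSemigroup.zero := nle_zero_eq hc0
        rw [this] at hc
        exact hB.2 hc
      have hAeq : A = A' := hAmax A' hA'proper hAA'
      refine Set.Subset.antisymm hdB ?_
      intro b hb
      have hmem : a * b ∈ A := by rw [hAeq]; exact ⟨b, hb, nle_refl _⟩
      refine ⟨a, ha, a * b, hmem, ?_⟩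
      rw [← mul_assoc]
      exact nle_of_idem_left (sinv_mul_idem a) b
    · rintro ⟨hdp, hdmax⟩
      refine ⟨(isProperFilter_dOf_iff hA).mp hdp, ?_⟩
      intro B hB hAB
      obtain ⟨a, ha⟩ := hA.1
      have hdBp : IsProperFilter (dOf B) := (isProperFilter_dOf_iff hB.1).mpr hB
      have hdd : dOf A = dOf B := hdmax (dOf B) hdBp (dOf_mono hAB)
      refine Set.Subset.antisymm hAB ?_
      intro t ht
      obtain ⟨e, he, hat⟩ := (mem_iff_mul_dOf hB.1 (hAB ha) t).mp ht
      rw [← hdd] at he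
      exact (mem_iff_mul_dOf hA ha t).mpr ⟨e, he, hat⟩
  · -- prime part
    constructor
    · rintro ⟨hAp, hAprime⟩
      refine ⟨(isProperFilter_dOf_iff hA).mpr hAp, ?_⟩
      rintro e f hef ⟨x, hx, u, hu, hj⟩
      obtain ⟨z, hz, hzx, hzu⟩ := hA.2.1 x hx u hu
      have h1 : nle z (x * (xⁱ * u)) := by
        have := nle_mul hzx (nle_mul (sinv_nle hzx) hzu)
        rwa [mul_sinv_mul'] at this
      have h2 : nle (x * (xⁱ * u)) (x * join e f) := nle_mul (nle_refl x) hj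
      have hmem : join (x * e) (x * f) ∈ A := by
        rw [← mul_join e f x hef]
        exact mem_of_nle hA hz (nle_trans h1 h2)
      rcases hAprime (x * e) (x * f) (compat_mul_left hef x) hmem with h | h
      · exact Or.inl ⟨x, hx, x * e, h, by
          rw [← mul_assoc]; exact nle_of_idem_left (sinv_mul_idem x) e⟩
      · exact Or.inr ⟨x, hx, x * f, h, by
          rw [← mul_assoc]; exact nle_of_idem_left (sinv_mul_idem x) f⟩
    · rintro ⟨hdp, hdprime⟩
      refine ⟨(isProperFilter_dOf_iff hA).mp hdp, ?_⟩
      intro a b hab hjoin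
      have hcc : (join a b)ⁱ * join a b ∈ dOf A := sinv_mul_mem_dOf hjoin hjoin
      rw [mul_join a b _ hab] at hcc
      rcases hdprime _ _ (compat_mul_left hab (join a b)ⁱ) hcc with h | h
      · refine Or.inl ((mem_iff_mul_dOf hA hjoin a).mpr ⟨_, h, ?_⟩)
        rw [← mul_assoc]
        exact nle_of_idem_left (mul_sinv_idem (join a b)) a
      · refine Or.inr ((mem_iff_mul_dOf hA hjoin b).mpr ⟨_, h, ?_⟩)
        rw [← mul_assoc]
        exact nle_of_idem_left (mul_sinv_idem (join a b)) b
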